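/- Let b > 0, let Q : ℝ → ℝ be continuously differentiable with Q(τ) > 0 for all τ ∈ [−b,b], and let R : ℝ → ℝ be continuous. Set A := ∫_{−b}^{b} Q(x) dx, B := ∫_{−b}^{b} x·Q(x) dx and C := ∫_{−b}^{b} x²·Q(x) dx, and let (σ₀, λ) be the unique pair of real numbers solving the linear system A·σ₀ + B·λ = Q(−b) + Q(b) + ∫_{−b}^{b} R(x)·Q(x) dx and B·σ₀ + C·λ = −b·Q(−b) + b·Q(b) + ∫_{−b}^{b} x·R(x)·Q(x) dx (this pair exists and is unique because A·C − B² > 0). Let σ be the unique real number satisfying 2b·Q(−b) = ∫_{−b}^{b} (σ − R(x))·(b−x)·Q(x) dx, and let φ be the momentum profile φ(τ) := (1/Q(τ)) · (2(τ+b)·Q(−b) − 2·∫_{−b}^{τ} (σ − R(x))·(τ−x)·Q(x) dx). Then −φ′(b)/2 = 1 − λ·(A·C − B²)/(Q(b)·(b·A − B)). -/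

import Mathlib

open intervalIntegral

/-- The momentum profile
`φ(τ) = (1/Q(τ)) · (2(τ+b)·Q(−b) − 2∫_{−b}^{τ} (σ − R(x))(τ−x)Q(x) dx)`. -/
noncomputable def momentumProfile (b σ : ℝ) (Q R : ℝ → ℝ) : ℝ → ℝ := fun τ =>
  (1 / Q τ) * (2 * (τ + b) * Q (-b) - 2 * ∫ x in (-b)..τ, (σ - R x) * (τ - x) * Q x)

/-!
With `f = (σ − R)·Q`, the numerator `g(τ) = 2(τ+b)Q(−b) − 2∫_{−b}^{τ} (τ−x) f(x) dx` of the
momentum profile has `g′(τ) = 2Q(−b) − 2∫_{−b}^{τ} f`, and the equation defining `σ` says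
`g(b) = 0`, so `φ′(b) = g′(b)/Q(b)` and `−φ′(b)/2 = (σA − ∫RQ − Q(−b))/Q(b)`. Eliminating `σ₀`
from the extremal system gives `λ(AC − B²) = A·(bQ(b) − bQ(−b) + ∫xRQ) − B·(Q(−b) + Q(b) + ∫RQ)`,
and combining this with `A` times the equation for `σ` gives the claim, after dividing by
`bA − B = ∫_{−b}^{b} (b − x) Q(x) dx > 0`.
-/

section SecondPrimitive

variable {f : ℝ → ℝ}

theorem integral_sub_mul_eq (hf : Continuous f) (a t : ℝ) :
    ∫ x in a..t, (t - x) * f x = t * (∫ x in a..t, f x) - ∫ x in a..t, x * f x := by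
  simp only [sub_mul]
  rw [integral_sub ((hf.const_mul t).intervalIntegrable _ _)
    ((by fun_prop : Continuous fun x => x * f x).intervalIntegrable _ _), integral_const_mul]

theorem hasDerivAt_integral_sub_mul (hf : Continuous f) (a t : ℝ) :
    HasDerivAt (fun τ => ∫ x in a..τ, (τ - x) * f x) (∫ x in a..t, f x) t := by
  simp only [integral_sub_mul_eq hf]
  have hF := (hf.integral_hasStrictDerivAt a t).hasDerivAt
  have hxF := ((by fun_prop : Continuous fun x => x * f x).integral_hasStrictDerivAt a t).hasDerivAt
  exact (((hasDerivAt_id' t).fun_mul hF).fun_sub hxF).congr_deriv (by ring)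

theorem integral_sub_mul_pos {a b : ℝ} (hab : a < b) (hf : Continuous f)
    (hpos : ∀ x ∈ Set.Ioo a b, 0 < f x) : 0 < ∫ x in a..b, (b - x) * f x :=
  intervalIntegral_pos_of_pos_on
    ((by fun_prop : Continuous fun x => (b - x) * f x).intervalIntegrable _ _)
    (fun x hx => mul_pos (sub_pos.2 hx.2) (hpos x hx)) hab

end SecondPrimitive

theorem HasDerivAt.fun_div_of_eq_zero {g Q : ℝ → ℝ} {g' Q' t : ℝ} (hg : HasDerivAt g g' t)
    (hQ : HasDerivAt Q Q' t) (hQt : Q t ≠ 0) (hgt : g t = 0) :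
    HasDerivAt (fun τ => g τ / Q τ) (g' / Q t) t :=
  (hg.fun_div hQ hQt).congr_deriv (by rw [hgt]; field_simp; ring)

theorem hasDerivAt_momentumProfile {b σ t : ℝ} {Q R : ℝ → ℝ} (hQ : Continuous Q)
    (hR : Continuous R) (hQt : DifferentiableAt ℝ Q t) (hQt₀ : Q t ≠ 0)
    (hzero : (t + b) * Q (-b) = ∫ x in (-b)..t, (σ - R x) * (t - x) * Q x) :
    HasDerivAt (momentumProfile b σ Q R)
      ((2 * Q (-b) - 2 * ∫ x in (-b)..t, (σ - R x) * Q x) / Q t) t := by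
  have hintegrand : ∀ τ x, (σ - R x) * (τ - x) * Q x = (τ - x) * ((σ - R x) * Q x) :=
    fun _ _ => by ring
  have hg : HasDerivAt (fun τ => 2 * (τ + b) * Q (-b)
      - 2 * ∫ x in (-b)..τ, (τ - x) * ((σ - R x) * Q x))
      (2 * Q (-b) - 2 * ∫ x in (-b)..t, (σ - R x) * Q x) t :=
    ((((hasDerivAt_id' t).add_const b).const_mul 2).mul_const (Q (-b))).fun_sub
      ((hasDerivAt_integral_sub_mul (by fun_prop) (-b) t).const_mul 2) |>.congr_deriv (by ring)
  simp only [hintegrand] at hzero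
  have := hg.fun_div_of_eq_zero hQt.hasDerivAt hQt₀ (by rw [← hzero]; ring)
  convert this using 1
  funext τ
  simp only [momentumProfile, hintegrand, one_div_mul_eq_div]

/-- The cone angle `β = −φ′(b)/2` of the momentum-constructed conically
singular cscK metric equals `1 − λ(AC−B²)/(Q(b)(bA−B))`, the unique angle at which the log
Futaki invariant of the fibrewise `ℂ*`-action vanishes; here `(σ₀, λ)` solve the extremal
linear system and `σ` is the cscK value determined by `φ(b)=0`. -/
theorem cone_angle_eq_log_futaki_zero (b : ℝ) (hb : 0 < b) (Q R : ℝ → ℝ)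
    (hQ : ContDiff ℝ 1 Q) (hR : Continuous R)
    (hQpos : ∀ τ ∈ Set.Icc (-b) b, 0 < Q τ) (σ₀ lam σ : ℝ)
    (hsys1 : (∫ x in (-b)..b, Q x) * σ₀ + (∫ x in (-b)..b, x * Q x) * lam
        = Q (-b) + Q b + ∫ x in (-b)..b, R x * Q x)
    (hsys2 : (∫ x in (-b)..b, x * Q x) * σ₀ + (∫ x in (-b)..b, x ^ 2 * Q x) * lam
        = -b * Q (-b) + b * Q b + ∫ x in (-b)..b, x * R x * Q x)
    (hσ : 2 * b * Q (-b) = ∫ x in (-b)..b, (σ - R x) * (b - x) * Q x) :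
    -(deriv (momentumProfile b σ Q R) b) / 2
      = 1 - lam * ((∫ x in (-b)..b, Q x) * (∫ x in (-b)..b, x ^ 2 * Q x)
              - (∫ x in (-b)..b, x * Q x) ^ 2)
          / (Q b * (b * (∫ x in (-b)..b, Q x) - ∫ x in (-b)..b, x * Q x)) := by
  have hQc := hQ.continuous
  have hf : Continuous fun x => (σ - R x) * Q x := by fun_prop
  have hQb : 0 < Q b := hQpos b ⟨by linarith, le_rfl⟩
  have hbA_sub_B : 0 < b * (∫ x in (-b)..b, Q x) - ∫ x in (-b)..b, x * Q x := by
    rw [← integral_sub_mul_eq hQc]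
    exact integral_sub_mul_pos (by linarith) hQc fun x hx => hQpos x (Set.Ioo_subset_Icc_self hx)
  have hmoment₀ : ∫ x in (-b)..b, (σ - R x) * Q x
      = σ * (∫ x in (-b)..b, Q x) - ∫ x in (-b)..b, R x * Q x := by
    simp only [sub_mul]
    rw [integral_sub, integral_const_mul] <;> apply Continuous.intervalIntegrable <;> fun_prop
  have hmoment₁ : ∫ x in (-b)..b, x * ((σ - R x) * Q x)
      = σ * (∫ x in (-b)..b, x * Q x) - ∫ x in (-b)..b, x * R x * Q x := by
    simp only [mul_sub, sub_mul, mul_left_comm _ σ, mul_assoc]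
    rw [integral_sub, integral_const_mul] <;> apply Continuous.intervalIntegrable <;> fun_prop
  have hσ' : 2 * b * Q (-b) = b * (σ * (∫ x in (-b)..b, Q x) - ∫ x in (-b)..b, R x * Q x)
      - (σ * (∫ x in (-b)..b, x * Q x) - ∫ x in (-b)..b, x * R x * Q x) := by
    rw [hσ, ← hmoment₀, ← hmoment₁, ← integral_sub_mul_eq hf]
    exact integral_congr fun x _ => by ring
  rw [(hasDerivAt_momentumProfile hQc hR (hQ.differentiable one_ne_zero b) hQb.ne'
    (by rw [← hσ]; ring)).deriv, hmoment₀]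
  field_simp
  set A := ∫ x in (-b)..b, Q x
  set B := ∫ x in (-b)..b, x * Q x
  linear_combination A * (hsys2 - hσ') - B * hsys1
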